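/- Let V be a finite-dimensional real vector space and L ⊆ 𝕋_ℂV a lagrangian subspace with E := pr_{V_ℂ}(L), ε ∈ Λ²E* the unique form with L = L(E,ε), Δ := (E ∩ Ē) ∩ V and ω_Δ := Im(ε|_{Δ×Δ}). Define L̂ := L(Δ, ω_Δ) = {X + α ∈ 𝕋V : X ∈ Δ, α(Y) = ω_Δ(X,Y) for all Y ∈ Δ}. Then L̂ = {X + Im(ξ) : X ∈ V, ξ ∈ (V_ℂ)*, X + ξ ∈ L}, where Im(ξ) ∈ V* is the real linear form v ↦ Im(ξ(v)); in particular L̂ is a lagrangian subspace of 𝕋V. -/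

import Mathlib

open TensorProduct Module

noncomputable section

namespace CDirac


/-- The real generalized tangent space `V ⊕ V*`. -/
abbrev TR (V : Type*) [AddCommGroup V] [Module ℝ V] := V × (V →ₗ[ℝ] ℝ)

variable {V : Type*} [AddCommGroup V] [Module ℝ V]

/-- The canonical pairing `⟨X+ξ, Y+η⟩ = (η X + ξ Y)/2` on `𝕋V`. -/
def pairR (a b : TR V) : ℝ := (b.2 a.1 + a.2 b.1) / 2

lemma pairR_add_left (a a' b : TR V) : pairR (a + a') b = pairR a b + pairR a' b := by
  simp only [pairR, Prod.fst_add, Prod.snd_add, map_add, LinearMap.add_apply]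
  ring

lemma pairR_smul_left (c : ℝ) (a b : TR V) : pairR (c • a) b = c * pairR a b := by
  simp only [pairR, Prod.smul_fst, Prod.smul_snd, map_smul, LinearMap.smul_apply,
    smul_eq_mul]
  ring

/-- Orthogonal complement with respect to the pairing on `𝕋V`. -/
def orthR (L : Submodule ℝ (TR V)) : Submodule ℝ (TR V) where
  carrier := {a | ∀ b ∈ L, pairR a b = 0}
  zero_mem' := fun b _ => by simp [pairR]
  add_mem' := fun {a a'} ha ha' b hb => by
    rw [pairR_add_left, ha b hb, ha' b hb, add_zero]
  smul_mem' := fun c a ha b hb => by rw [pairR_smul_left, ha b hb, mul_zero]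

/-- A real lagrangian subspace: `L = L^⊥`. -/
def IsLagrangianR (L : Submodule ℝ (TR V)) : Prop := L = orthR L

/-- An isotropic subspace of `𝕋V`. -/
def IsIsotropicR (K : Submodule ℝ (TR V)) : Prop := ∀ a ∈ K, ∀ b ∈ K, pairR a b = 0

/-- The quotient `K^⊥/K`. -/
abbrev quotK (K : Submodule ℝ (TR V)) :=
  @HasQuotient.Quotient ↥(orthR K) (Submodule ℝ ↥(orthR K))
    (Submodule.hasQuotient (R := ℝ) (M := ↥(orthR K))) (K.comap (orthR K).subtype)

/-- The quotient map `K^⊥ → K^⊥/K`. -/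
def mkK (K : Submodule ℝ (TR V)) : ↥(orthR K) →ₗ[ℝ] quotK K :=
  @Submodule.mkQ ℝ ↥(orthR K) _ (orthR K).addCommGroup _ (K.comap (orthR K).subtype)




/-- The complexification `V_ℂ = ℂ ⊗_ℝ V`. -/
abbrev Cx (V : Type*) [AddCommGroup V] [Module ℝ V] := ℂ ⊗[ℝ] V

/-- The complex dual `(V_ℂ)^*`. -/
abbrev DualC (V : Type*) [AddCommGroup V] [Module ℝ V] := Cx V →ₗ[ℂ] ℂ

/-- The complexified generalized tangent space `𝕋_ℂ V = V_ℂ ⊕ (V_ℂ)^*`. -/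
abbrev TCx (V : Type*) [AddCommGroup V] [Module ℝ V] := Cx V × DualC V

/-- The ℂ-bilinear pairing on `𝕋_ℂ V`. -/
def pairC (a b : TCx V) : ℂ := (b.2 a.1 + a.2 b.1) / 2

lemma pairC_add_left (a a' b : TCx V) : pairC (a + a') b = pairC a b + pairC a' b := by
  simp only [pairC, Prod.fst_add, Prod.snd_add, map_add, LinearMap.add_apply]
  ring

lemma pairC_smul_left (c : ℂ) (a b : TCx V) : pairC (c • a) b = c * pairC a b := by
  simp only [pairC, Prod.smul_fst, Prod.smul_snd, map_smul, LinearMap.smul_apply,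
    smul_eq_mul]
  ring

/-- Orthogonal complement with respect to the ℂ-bilinear pairing on `𝕋_ℂ V`. -/
def orthC (L : Submodule ℂ (TCx V)) : Submodule ℂ (TCx V) where
  carrier := {a | ∀ b ∈ L, pairC a b = 0}
  zero_mem' := fun b _ => by simp [pairC]
  add_mem' := fun {a a'} ha ha' b hb => by
    rw [pairC_add_left, ha b hb, ha' b hb, add_zero]
  smul_mem' := fun c a ha b hb => by rw [pairC_smul_left, ha b hb, mul_zero]

/-- A complex lagrangian subspace: `L = L^⊥`. -/
def IsLagrangianC (L : Submodule ℂ (TCx V)) : Prop := L = orthC L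

private lemma conjCxAux_smul (z : ℂ) (x : Cx V) :
    TensorProduct.map Complex.conjAe.toLinearMap LinearMap.id (z • x) =
      starRingEnd ℂ z • TensorProduct.map Complex.conjAe.toLinearMap LinearMap.id x := by
  induction x using TensorProduct.induction_on with
  | zero => simp
  | tmul w v => simp [smul_tmul', smul_eq_mul, Complex.conjAe_coe, map_mul]
  | add x y hx hy => simp only [smul_add, map_add, hx, hy]

/-- Conjugation on `V_ℂ`, as a `conj`-semilinear map. -/
def conjCx : Cx V →ₛₗ[starRingEnd ℂ] Cx V where
  toFun := TensorProduct.map Complex.conjAe.toLinearMap LinearMap.id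
  map_add' := map_add _
  map_smul' := conjCxAux_smul

lemma conjCx_smul (z : ℂ) (x : Cx V) :
    conjCx (z • x) = starRingEnd ℂ z • conjCx x := conjCxAux_smul z x

/-- Conjugation of a complex linear functional. -/
def conjDualFun (ξ : DualC V) : DualC V where
  toFun x := starRingEnd ℂ (ξ (conjCx x))
  map_add' x y := by simp
  map_smul' z x := by
    rw [conjCx_smul, map_smul, smul_eq_mul, map_mul, RingHom.id_apply]
    simp [smul_eq_mul]

/-- Conjugation on `(V_ℂ)^*`, as a `conj`-semilinear map. -/
def conjDual : DualC V →ₛₗ[starRingEnd ℂ] DualC V where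
  toFun := conjDualFun
  map_add' ξ η := by ext x; simp [conjDualFun]
  map_smul' z ξ := by
    ext x
    simp [conjDualFun, smul_eq_mul, map_mul]

/-- Conjugation on `𝕋_ℂ V`, as a `conj`-semilinear map. -/
def conjT : TCx V →ₛₗ[starRingEnd ℂ] TCx V where
  toFun a := (conjCx a.1, conjDual a.2)
  map_add' a b := by simp [Prod.ext_iff]
  map_smul' z a := by
    simp [Prod.ext_iff, Prod.smul_fst, Prod.smul_snd, map_smulₛₗ]

instance : RingHomSurjective (starRingEnd ℂ) :=
  ⟨fun z => ⟨starRingEnd ℂ z, by simp⟩⟩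

/-- The conjugate `L̄` of a ℂ-subspace of `𝕋_ℂ V`. -/
def conjSub (L : Submodule ℂ (TCx V)) : Submodule ℂ (TCx V) := L.map conjT

/-- The conjugate `Ē` of a ℂ-subspace of `V_ℂ`. -/
def conjE (E : Submodule ℂ (Cx V)) : Submodule ℂ (Cx V) := E.map conjCx

/-- The canonical inclusion `V → V_ℂ`, `v ↦ 1 ⊗ v`. -/
def iV : V →ₗ[ℝ] Cx V := TensorProduct.mk ℝ ℂ V 1





/-- ℝ-linear auxiliary version of the ℂ-linear extension of a real functional. -/
def dualExtAux (α : V →ₗ[ℝ] ℝ) : Cx V →ₗ[ℝ] ℂ :=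
  TensorProduct.lift
    (LinearMap.mk₂ ℝ (fun z v => z * (α v : ℂ))
      (fun z w v => by push_cast; ring)
      (fun r z v => by simp only [Complex.real_smul]; ring)
      (fun z v w => by push_cast [map_add]; ring)
      (fun r z v => by simp only [map_smul, smul_eq_mul, Complex.real_smul]; push_cast; ring))

private lemma dualExtAux_smulC (α : V →ₗ[ℝ] ℝ) (z : ℂ) (x : Cx V) :
    dualExtAux α (z • x) = z * dualExtAux α x := by
  induction x using TensorProduct.induction_on with
  | zero => simp
  | tmul w v =>
      simp only [dualExtAux, smul_tmul', lift.tmul, LinearMap.mk₂_apply, smul_eq_mul]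
      ring
  | add x y hx hy => simp only [smul_add, map_add, hx, hy]; ring

/-- The ℂ-linear extension of a real functional `α : V → ℝ` to `V_ℂ`. -/
def dualExtFun (α : V →ₗ[ℝ] ℝ) : DualC V where
  toFun := dualExtAux α
  map_add' := map_add _
  map_smul' z x := by simpa using dualExtAux_smulC α z x

private lemma dualExtFun_tmul (α : V →ₗ[ℝ] ℝ) (z : ℂ) (v : V) :
    dualExtFun α (z ⊗ₜ[ℝ] v) = z * (α v : ℂ) := by
  simp [dualExtFun, dualExtAux]

/-- The ℂ-linear extension map `V^* → (V_ℂ)^*`, as an ℝ-linear map. -/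
def dualExt : (V →ₗ[ℝ] ℝ) →ₗ[ℝ] DualC V where
  toFun := dualExtFun
  map_add' α β := by
    apply LinearMap.ext; intro x
    induction x using TensorProduct.induction_on with
    | zero => simp
    | tmul w v =>
        simp only [dualExtFun_tmul, LinearMap.add_apply]
        push_cast
        ring
    | add x y hx hy =>
        simp only [map_add, LinearMap.add_apply] at *
        rw [hx, hy]
  map_smul' r α := by
    apply LinearMap.ext; intro x
    induction x using TensorProduct.induction_on with
    | zero => simp
    | tmul w v =>
        simp only [dualExtFun_tmul, RingHom.id_apply, LinearMap.smul_apply,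
          LinearMap.smul_apply, smul_eq_mul, Complex.real_smul]
        push_cast
        ring
    | add x y hx hy =>
        simp only [map_add, RingHom.id_apply, LinearMap.smul_apply, smul_eq_mul] at *
        rw [hx, hy]

/-- The canonical inclusion `𝕋V → 𝕋_ℂV`. -/
def iT : TR V →ₗ[ℝ] TCx V where
  toFun a := (iV a.1, dualExt a.2)
  map_add' a b := by simp [Prod.ext_iff]
  map_smul' r a := by simp [Prod.ext_iff]



/-- Auxiliary ℝ-linear version of the ℂ-bilinear extension of a real bilinear form. -/
def bilinExtAux (B : V →ₗ[ℝ] V →ₗ[ℝ] ℝ) : Cx V →ₗ[ℝ] DualC V :=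
  TensorProduct.lift
    (LinearMap.mk₂ ℝ (fun z v => z • dualExt (B v))
      (fun z w v => by simp only [add_smul])
      (fun r z v => by simp only [smul_assoc])
      (fun z v w => by simp only [map_add, smul_add])
      (fun r z v => by simp only [map_smul]; exact smul_comm z r _))

private lemma bilinExtAux_smulC (B : V →ₗ[ℝ] V →ₗ[ℝ] ℝ) (z : ℂ) (x : Cx V) :
    bilinExtAux B (z • x) = z • bilinExtAux B x := by
  induction x using TensorProduct.induction_on with
  | zero => simp
  | tmul w v =>
      simp only [bilinExtAux, smul_tmul', lift.tmul, LinearMap.mk₂_apply, smul_eq_mul,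
        mul_smul]
  | add x y hx hy => simp only [smul_add, map_add, hx, hy]

/-- The ℂ-bilinear extension of a real bilinear form `B : V × V → ℝ` to `V_ℂ`. -/
def bilinExt (B : V →ₗ[ℝ] V →ₗ[ℝ] ℝ) : Cx V →ₗ[ℂ] DualC V where
  toFun := bilinExtAux B
  map_add' := map_add _
  map_smul' z x := by simpa using bilinExtAux_smulC B z x

/-- The `B`-transformation `e^B(X+ξ) = X + ξ + B̃(X,·)` of `𝕋_ℂV`, for a real `B`. -/
def eB (B : V →ₗ[ℝ] V →ₗ[ℝ] ℝ) : TCx V →ₗ[ℂ] TCx V where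
  toFun a := (a.1, a.2 + bilinExt B a.1)
  map_add' a b := by
    simp only [Prod.fst_add, Prod.snd_add, map_add, Prod.mk_add_mk, Prod.mk.injEq]
    exact ⟨trivial, by abel⟩
  map_smul' z a := by
    simp only [Prod.smul_fst, Prod.smul_snd, map_smul, RingHom.id_apply, Prod.smul_mk,
      Prod.mk.injEq, smul_add]

/-- The real `B`-transformation `e^B(X+α) = X + α + B(X,·)` of `𝕋V`. -/
def eBR (B : V →ₗ[ℝ] V →ₗ[ℝ] ℝ) : TR V →ₗ[ℝ] TR V where
  toFun a := (a.1, a.2 + B a.1)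
  map_add' a b := by
    simp only [Prod.fst_add, Prod.snd_add, map_add, Prod.mk_add_mk, Prod.mk.injEq]
    exact ⟨trivial, by abel⟩
  map_smul' r a := by
    simp only [Prod.smul_fst, Prod.smul_snd, map_smul, RingHom.id_apply, Prod.smul_mk,
      Prod.mk.injEq, smul_add]


/-- The range `E = pr_{V_ℂ}(L)` of a subspace of `𝕋_ℂV`. -/
def Esub (L : Submodule ℂ (TCx V)) : Submodule ℂ (Cx V) :=
  L.map (LinearMap.fst ℂ (Cx V) (DualC V))

/-- The real index `r = dim_ℂ (L ∩ L̄)`. -/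
def riL (L : Submodule ℂ (TCx V)) : ℕ := finrank ℂ ↥(L ⊓ conjSub L)

/-- The real part `K = (L ∩ L̄) ∩ 𝕋V`, as a subspace of `𝕋V`. -/
def Ksub (L : Submodule ℂ (TCx V)) : Submodule ℝ (TR V) :=
  ((L ⊓ conjSub L).restrictScalars ℝ).comap iT

/-- The distribution `D = (E + Ē) ∩ V`, as a subspace of `V`. -/
def Dsub (L : Submodule ℂ (TCx V)) : Submodule ℝ V :=
  ((Esub L ⊔ conjE (Esub L)).restrictScalars ℝ).comap iV

/-- The distribution `Δ = (E ∩ Ē) ∩ V`, as a subspace of `V`. -/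
def DeltaSub (L : Submodule ℂ (TCx V)) : Submodule ℝ V :=
  ((Esub L ⊓ conjE (Esub L)).restrictScalars ℝ).comap iV

/-- The order `s = dim V - dim D`. -/
def orderL (L : Submodule ℂ (TCx V)) : ℕ := finrank ℝ V - finrank ℝ ↥(Dsub L)

/-- The (normalized) type `k = dim_ℂ(E + Ē) - dim_ℂ E`. -/
def typeL (L : Submodule ℂ (TCx V)) : ℕ :=
  finrank ℂ ↥(Esub L ⊔ conjE (Esub L)) - finrank ℂ ↥(Esub L)


end CDirac

/-!
Write `L̂ = {X + Im ξ : X + ξ ∈ L}`. A lift `ξ` of `ε(X, ·)` gives `X + Im ξ ∈ L̂`, and adding to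
`ξ` an element of `Ann(E)` changes `Im ξ` by an arbitrary element of `Ann(Δ)`, because `Im` maps
`Ann(E)` onto `Ann(Δ)`; this identifies `L̂` with `L(Δ, ω_Δ)`. Isotropy of `L` makes `L̂`
isotropic, and an isotropic `K ⊆ 𝕋V` with `0 ⊕ Ann(pr_V K) ⊆ K` is lagrangian.
-/

namespace CDirac

variable {V : Type*} [AddCommGroup V] [Module ℝ V]

lemma isLagrangianR_of_isIsotropicR {K : Submodule ℝ (TR V)} (hK : IsIsotropicR K)
    (hann : ∀ β ∈ (K.map (LinearMap.fst ℝ V (V →ₗ[ℝ] ℝ))).dualAnnihilator,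
      ((0 : V), β) ∈ K) :
    IsLagrangianR K := by
  refine le_antisymm (fun a ha b hb => hK a ha b hb) ?_
  rintro ⟨X₀, α⟩ ha
  have hpair : ∀ b ∈ K, (b.2 X₀ + α b.1) / 2 = 0 := ha
  have hX : X₀ ∈ K.map (LinearMap.fst ℝ V (V →ₗ[ℝ] ℝ)) := by
    rw [← Subspace.dualAnnihilator_dualCoannihilator_eq (W := K.map _),
      Submodule.mem_dualCoannihilator]
    intro β hβ
    simpa using hpair _ (hann β hβ)
  obtain ⟨⟨X, γ⟩, hγ, rfl⟩ := hX
  have hαγ : α - γ ∈ (K.map (LinearMap.fst ℝ V (V →ₗ[ℝ] ℝ))).dualAnnihilator := by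
    rw [Submodule.mem_dualAnnihilator]
    rintro _ ⟨⟨Y, δ⟩, hδ, rfl⟩
    have h₁ := hpair _ hδ
    have h₂ : (δ X + γ Y) / 2 = 0 := hK _ hγ _ hδ
    simp only [LinearMap.fst_apply, LinearMap.sub_apply] at h₁ ⊢
    linarith
  change ((X, α) : TR V) ∈ K
  rw [show ((X, α) : TR V) = (X, γ) + ((0 : V), α - γ) by simp]
  exact K.add_mem hγ (hann _ hαγ)

lemma conjCx_iV (v : V) : conjCx (iV v) = iV v := by
  simp [conjCx, iV, Complex.conjAe_coe]

/-- Models `Δ = (E ∩ Ē) ∩ V`: a real vector of `E` is automatically in `Ē`. -/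
def realPoints (E : Submodule ℂ (Cx V)) : Submodule ℝ V := (E.restrictScalars ℝ).comap iV

lemma iV_mem_conjE {E : Submodule ℂ (Cx V)} {v : V} (hv : iV v ∈ E) : iV v ∈ conjE E :=
  ⟨iV v, hv, conjCx_iV v⟩

def imDual : DualC V →ₗ[ℝ] (V →ₗ[ℝ] ℝ) where
  toFun ξ := Complex.imLm ∘ₗ ξ.restrictScalars ℝ ∘ₗ iV
  map_add' ξ η := by ext; simp
  map_smul' r ξ := by ext; simp

@[simp]
lemma imDual_apply (ξ : DualC V) (v : V) : imDual ξ v = (ξ (iV v)).im := rfl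

/-- Since `Ann(E)` is complex, a real vector killed by the imaginary parts of `Ann(E)` is killed
by `Ann(E)`, hence lies in `E`; conclude by taking annihilators once more. -/
lemma exists_imDual_eq [FiniteDimensional ℝ V] (E : Submodule ℂ (Cx V)) {β : V →ₗ[ℝ] ℝ}
    (hβ : β ∈ (realPoints E).dualAnnihilator) :
    ∃ η ∈ E.dualAnnihilator, imDual η = β := by
  set W := (E.dualAnnihilator.restrictScalars ℝ).map (imDual (V := V))
  have hW : W.dualCoannihilator ≤ realPoints E := by
    intro v hv
    rw [Submodule.mem_dualCoannihilator] at hv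
    change iV v ∈ E
    rw [← Subspace.dualAnnihilator_dualCoannihilator_eq (W := E),
      Submodule.mem_dualCoannihilator]
    intro η hη
    have him : (η (iV v)).im = 0 := hv _ ⟨η, hη, rfl⟩
    have hre : imDual (-Complex.I • η) v = 0 :=
      hv _ ⟨_, E.dualAnnihilator.smul_mem (-Complex.I) hη, rfl⟩
    simp only [imDual_apply, LinearMap.smul_apply, smul_eq_mul] at hre
    apply Complex.ext <;> simp_all
  have hβW := Submodule.dualAnnihilator_anti hW hβ
  rwa [Subspace.dualCoannihilator_dualAnnihilator_eq] at hβW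

def LhatSub (L : Submodule ℂ (TCx V)) : Submodule ℝ (TR V) :=
  ((L.restrictScalars ℝ).comap (iV.prodMap LinearMap.id)).map (LinearMap.id.prodMap imDual)

lemma mem_LhatSub {L : Submodule ℂ (TCx V)} {a : TR V} :
    a ∈ LhatSub L ↔ ∃ ξ : DualC V, (iV a.1, ξ) ∈ L ∧ ∀ v : V, a.2 v = (ξ (iV v)).im := by
  constructor
  · rintro ⟨⟨X, ξ⟩, hξ, rfl⟩
    exact ⟨ξ, hξ, fun v => rfl⟩
  · rintro ⟨ξ, hξ, hα⟩
    exact ⟨(a.1, ξ), hξ, Prod.ext rfl (LinearMap.ext fun v => (hα v).symm)⟩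

lemma isIsotropicR_LhatSub {L : Submodule ℂ (TCx V)} (hL : IsLagrangianC L) :
    IsIsotropicR (LhatSub L) := by
  rintro _ ⟨⟨X, ξ⟩, hξ, rfl⟩ _ ⟨⟨Y, η⟩, hη, rfl⟩
  have hXY : (η (iV X) + ξ (iV Y)) / 2 = 0 := (hL ▸ hξ : (iV X, ξ) ∈ orthC L) _ hη
  have hXY' : η (iV X) + ξ (iV Y) = 0 := by simpa using hXY
  change ((η (iV X)).im + (ξ (iV Y)).im) / 2 = 0
  rw [← Complex.add_im, hXY', Complex.zero_im, zero_div]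

section LagrangianOfForm

variable {L : Submodule ℂ (TCx V)} {E : Submodule ℂ (Cx V)} {ε : ↥E →ₗ[ℂ] ↥E →ₗ[ℂ] ℂ}

lemma exists_mk_mem_of_mem
    (hchar : ∀ a : TCx V, a ∈ L ↔ ∃ h : a.1 ∈ E, ∀ y : ↥E, a.2 ↑y = ε ⟨a.1, h⟩ y)
    {x : Cx V} (hx : x ∈ E) :
    ∃ ξ : DualC V, (x, ξ) ∈ L ∧ ∀ y : ↥E, ξ y = ε ⟨x, hx⟩ y := by
  obtain ⟨ξ, hξ⟩ := (ε ⟨x, hx⟩).exists_extend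
  have hξ' (y : ↥E) : ξ y = ε ⟨x, hx⟩ y := LinearMap.congr_fun hξ y
  exact ⟨ξ, (hchar _).2 ⟨hx, hξ'⟩, hξ'⟩

lemma mk_zero_mem_of_mem_dualAnnihilator
    (hchar : ∀ a : TCx V, a ∈ L ↔ ∃ h : a.1 ∈ E, ∀ y : ↥E, a.2 ↑y = ε ⟨a.1, h⟩ y)
    {η : DualC V} (hη : η ∈ E.dualAnnihilator) :
    ((0 : Cx V), η) ∈ L := by
  refine (hchar _).2 ⟨E.zero_mem, fun y => ?_⟩
  rw [(Submodule.mem_dualAnnihilator η).1 hη y y.2, show (⟨0, E.zero_mem⟩ : ↥E) = 0 from rfl,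
    map_zero, LinearMap.zero_apply]

lemma mem_LhatSub_iff [FiniteDimensional ℝ V]
    (hchar : ∀ a : TCx V, a ∈ L ↔ ∃ h : a.1 ∈ E, ∀ y : ↥E, a.2 ↑y = ε ⟨a.1, h⟩ y)
    {a : TR V} :
    a ∈ LhatSub L ↔ ∃ (h1 : iV a.1 ∈ E) (_ : iV a.1 ∈ conjE E),
      ∀ (Y : V) (g1 : iV Y ∈ E) (_ : iV Y ∈ conjE E),
        a.2 Y = (ε ⟨iV a.1, h1⟩ ⟨iV Y, g1⟩).im := by
  constructor
  · rintro ⟨⟨X, ξ⟩, hξ, rfl⟩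
    obtain ⟨h1, hval⟩ := (hchar _).1 hξ
    exact ⟨h1, iV_mem_conjE h1, fun Y g1 _ => congrArg Complex.im (hval ⟨iV Y, g1⟩)⟩
  · rintro ⟨h1, -, hα⟩
    obtain ⟨ξ, hξ, hξε⟩ := exists_mk_mem_of_mem hchar h1
    have hβ : a.2 - imDual ξ ∈ (realPoints E).dualAnnihilator := by
      rw [Submodule.mem_dualAnnihilator]
      intro Y hY
      rw [LinearMap.sub_apply, imDual_apply, hα Y hY (iV_mem_conjE hY), hξε ⟨iV Y, hY⟩, sub_self]
    obtain ⟨η, hη, hηβ⟩ := exists_imDual_eq E hβ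
    refine ⟨(a.1, ξ + η), ?_, Prod.ext rfl ?_⟩
    · change (iV a.1, ξ + η) ∈ L
      simpa using L.add_mem hξ (mk_zero_mem_of_mem_dualAnnihilator hchar hη)
    · change imDual (ξ + η) = a.2
      rw [map_add, hηβ, add_sub_cancel]

lemma isLagrangianR_LhatSub [FiniteDimensional ℝ V] (hL : IsLagrangianC L)
    (hchar : ∀ a : TCx V, a ∈ L ↔ ∃ h : a.1 ∈ E, ∀ y : ↥E, a.2 ↑y = ε ⟨a.1, h⟩ y) :
    IsLagrangianR (LhatSub L) := by
  refine isLagrangianR_of_isIsotropicR (isIsotropicR_LhatSub hL) fun β hβ => ?_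
  have hΔ : realPoints E ≤ (LhatSub L).map (LinearMap.fst ℝ V (V →ₗ[ℝ] ℝ)) := by
    intro X hX
    obtain ⟨ξ, hξ, -⟩ := exists_mk_mem_of_mem hchar hX
    exact ⟨(X, imDual ξ), mem_LhatSub.2 ⟨ξ, hξ, fun _ => rfl⟩, rfl⟩
  obtain ⟨η, hη, rfl⟩ := exists_imDual_eq E (Submodule.dualAnnihilator_anti hΔ hβ)
  refine mem_LhatSub.2 ⟨η, ?_, fun _ => rfl⟩
  simpa using mk_zero_mem_of_mem_dualAnnihilator hchar hη

end LagrangianOfForm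

end CDirac

open CDirac Module

theorem stmt14_general (V : Type*) [AddCommGroup V] [Module ℝ V] [FiniteDimensional ℝ V]
    (L : Submodule ℂ (TCx V)) (hL : IsLagrangianC L)
    (E : Submodule ℂ (Cx V))
    (ε : ↥E →ₗ[ℂ] ↥E →ₗ[ℂ] ℂ)
    (hchar : ∀ a : TCx V, a ∈ L ↔ ∃ h : a.1 ∈ E, ∀ y : ↥E, a.2 ↑y = ε ⟨a.1, h⟩ y) :
    -- `L̂ := L(Δ, ω_Δ)` equals `{X + Im ξ : X + ξ ∈ L}` ...
    {a : TR V | ∃ (h1 : iV a.1 ∈ E) (_ : iV a.1 ∈ conjE E),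
        ∀ (Y : V) (g1 : iV Y ∈ E) (_ : iV Y ∈ conjE E),
          a.2 Y = (ε ⟨iV a.1, h1⟩ ⟨iV Y, g1⟩).im} =
      {a : TR V | ∃ ξ : DualC V, (iV a.1, ξ) ∈ L ∧ ∀ v : V, a.2 v = (ξ (iV v)).im} ∧
    -- ... and is a lagrangian subspace of `𝕋V`.
    ∃ Lh : Submodule ℝ (TR V),
      (Lh : Set (TR V)) =
        {a : TR V | ∃ (h1 : iV a.1 ∈ E) (_ : iV a.1 ∈ conjE E),
          ∀ (Y : V) (g1 : iV Y ∈ E) (_ : iV Y ∈ conjE E),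
            a.2 Y = (ε ⟨iV a.1, h1⟩ ⟨iV Y, g1⟩).im} ∧
      IsLagrangianR Lh := by
  refine ⟨?_, LhatSub L, ?_, isLagrangianR_LhatSub hL hchar⟩
  · ext a
    exact (mem_LhatSub_iff hchar).symm.trans mem_LhatSub
  · ext a
    exact mem_LhatSub_iff hchar

/-- For a lagrangian `L = L(E,ε) ⊆ 𝕋_ℂV`, the associated real
distribution `L̂ = L(Δ, ω_Δ)` equals `{X + Im ξ : X + ξ ∈ L}`; in particular `L̂` is a
lagrangian subspace of `𝕋V`. -/
theorem stmt14 (V : Type*) [AddCommGroup V] [Module ℝ V] [FiniteDimensional ℝ V]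
    (L : Submodule ℂ (TCx V)) (hL : IsLagrangianC L)
    (E : Submodule ℂ (Cx V)) (hE : E = Esub L)
    (ε : ↥E →ₗ[ℂ] ↥E →ₗ[ℂ] ℂ) (halt : ∀ x : ↥E, ε x x = 0)
    (hchar : ∀ a : TCx V, a ∈ L ↔ ∃ h : a.1 ∈ E, ∀ y : ↥E, a.2 ↑y = ε ⟨a.1, h⟩ y) :
    -- `L̂ := L(Δ, ω_Δ)` equals `{X + Im ξ : X + ξ ∈ L}` ...
    {a : TR V | ∃ (h1 : iV a.1 ∈ E) (_ : iV a.1 ∈ conjE E),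
        ∀ (Y : V) (g1 : iV Y ∈ E) (_ : iV Y ∈ conjE E),
          a.2 Y = (ε ⟨iV a.1, h1⟩ ⟨iV Y, g1⟩).im} =
      {a : TR V | ∃ ξ : DualC V, (iV a.1, ξ) ∈ L ∧ ∀ v : V, a.2 v = (ξ (iV v)).im} ∧
    -- ... and is a lagrangian subspace of `𝕋V`.
    ∃ Lh : Submodule ℝ (TR V),
      (Lh : Set (TR V)) =
        {a : TR V | ∃ (h1 : iV a.1 ∈ E) (_ : iV a.1 ∈ conjE E),
          ∀ (Y : V) (g1 : iV Y ∈ E) (_ : iV Y ∈ conjE E),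
            a.2 Y = (ε ⟨iV a.1, h1⟩ ⟨iV Y, g1⟩).im} ∧
      IsLagrangianR Lh :=
  stmt14_general V L hL E ε hchar
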